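/- arXiv:2310.00979 — 2 statements merged into one kernel-verified Lean document; each statement's English description precedes it below -/
import Mathlib

section
/- (Gevrey Borel theorem via Carleson's moment method.) Let s ≥ 1, m ∈ ℝ, n ≥ 1. Let (a_j)_{j≥0} be a formal Gevrey-s symbol of degree m on ℝⁿ × ℝⁿ: each a_j = a_j(x,θ;h) is smooth in (x,θ) and there is C > 0 such that for all j ∈ ℕ, all multi-indices α, β ∈ ℕⁿ, all (x,θ) and all h ∈ (0,1], |∂_x^α ∂_θ^β a_j(x,θ;h)| ≤ C^{1+|α|+|β|+j} (j!)^s (α!)^s (β!)^s h^{j−m}. Then there exists a smooth function a = a(x,θ;h) and a constant C' > 0 such that for every N ≥ 0, all α, β ∈ ℕⁿ, all (x,θ) and all h ∈ (0,1], |∂_x^α ∂_θ^β (a − Σ_{j<N} a_j)(x,θ;h)| ≤ C'^{1+|α|+|β|+N} (N!)^s (α!)^s (β!)^s h^{N−m}. In particular (taking N = 0), a is a semiclassical Gevrey-s symbol of order m. -/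
open MeasureTheory Real

/-- Iterated directional derivative along a list of directions. -/
noncomputable def dirDeriv {E F : Type*} [NormedAddCommGroup E] [NormedSpace ℝ E]
    [NormedAddCommGroup F] [NormedSpace ℝ F] : List E → (E → F) → (E → F)
  | [], f => f
  | v :: l, f => dirDeriv l (fun x => fderiv ℝ f x v)

/-- The list of directions encoding the multi-index derivative `∂^α`. -/
def mIdxList {n : ℕ} {E : Type*} (α : Fin n → ℕ) (e : Fin n → E) : List E :=
  (List.finRange n).flatMap fun i => List.replicate (α i) (e i)

/-- Multi-index factorial. -/
def mfact {n : ℕ} (α : Fin n → ℕ) : ℕ := ∏ i, Nat.factorial (α i)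

/-- Multi-index size. -/
def msize {n : ℕ} (α : Fin n → ℕ) : ℕ := ∑ i, α i

/-- The `i`-th coordinate direction in the `x` factor of `ℝⁿ × ℝⁿ`. -/
def ex (n : ℕ) (i : Fin n) : (Fin n → ℝ) × (Fin n → ℝ) := (Pi.single i 1, 0)

/-- The `j`-th coordinate direction in the `θ` factor of `ℝⁿ × ℝⁿ`. -/
def eθ (n : ℕ) (j : Fin n) : (Fin n → ℝ) × (Fin n → ℝ) := (0, Pi.single j 1)

section helpers
variable {E F : Type*} [NormedAddCommGroup E] [NormedSpace ℝ E]
  [NormedAddCommGroup F] [NormedSpace ℝ F]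

lemma dirDeriv_contDiff (l : List E) (f : E → F) (hf : ContDiff ℝ (⊤ : ℕ∞) f) :
    ContDiff ℝ (⊤ : ℕ∞) (dirDeriv l f) := by
  induction l generalizing f with
  | nil => exact hf
  | cons v l ih =>
    rw [dirDeriv]
    exact ih _ ((hf.fderiv_right (by simp)).clm_apply contDiff_const)

lemma dirDeriv_sum {ι : Type*} (t : Finset ι) (l : List E) (f : ι → E → F)
    (hf : ∀ i ∈ t, ContDiff ℝ (⊤ : ℕ∞) (f i)) :
    dirDeriv l (fun x => ∑ i ∈ t, f i x) = fun x => ∑ i ∈ t, dirDeriv l (f i) x := by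
  induction l generalizing f with
  | nil => rfl
  | cons v l ih =>
    rw [dirDeriv]
    have h1 : (fun x => fderiv ℝ (fun y => ∑ i ∈ t, f i y) x v)
        = fun x => ∑ i ∈ t, fderiv ℝ (f i) x v := by
      funext x
      rw [fderiv_fun_sum (fun i hi => ((hf i hi).differentiable (by simp)).differentiableAt)]
      simp
    rw [h1, ih _ (fun i hi => ((hf i hi).fderiv_right (by simp)).clm_apply contDiff_const)]
    rfl

lemma dirDeriv_neg (l : List E) (f : E → F) :
    dirDeriv l (fun x => -f x) = fun x => -dirDeriv l f x := by
  induction l generalizing f with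
  | nil => rfl
  | cons v l ih =>
    rw [dirDeriv, dirDeriv]
    have h1 : (fun x => fderiv ℝ (fun y => -f y) x v) = fun x => -(fderiv ℝ f x v) := by
      funext x; rw [fderiv_fun_neg]; simp
    rw [h1, ih]

end helpers
lemma choose_le_two_pow (j k : ℕ) : j.choose k ≤ 2 ^ j := by
  rcases le_or_gt k j with h | h
  · calc j.choose k ≤ ∑ i ∈ Finset.range (j+1), j.choose i :=
        Finset.single_le_sum (fun i _ => Nat.zero_le _) (Finset.mem_range.2 (by omega))
    _ = 2 ^ j := Nat.sum_range_choose j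
  · rw [Nat.choose_eq_zero_of_lt h]; exact Nat.zero_le _

lemma npow_le_exp_mul_factorial (N : ℕ) : (N:ℝ)^N ≤ Real.exp N * N.factorial := by
  have hf : (0:ℝ) < N.factorial := by positivity
  have h1 : (N:ℝ)^N / N.factorial ≤ Real.exp N := by
    calc (N:ℝ)^N / N.factorial
        ≤ ∑ i ∈ Finset.range (N+1), (N:ℝ)^i / i.factorial := by
          refine Finset.single_le_sum (f := fun i => (N:ℝ)^i / (i.factorial:ℝ)) ?_
            (Finset.self_mem_range_succ N)
          intro i _; positivity
      _ ≤ Real.exp N := Real.sum_le_exp_of_nonneg (by positivity) _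
  calc (N:ℝ)^N = (N:ℝ)^N / N.factorial * N.factorial := by field_simp
    _ ≤ Real.exp N * N.factorial := by gcongr

lemma geom_half_le_two (K : ℕ) : ∑ k ∈ Finset.range K, ((2:ℝ)⁻¹)^k ≤ 2 := by
  have h0 : (0:ℝ) ≤ (2⁻¹:ℝ)^K := by positivity
  rw [geom_sum_eq (by norm_num) K, div_le_iff_of_neg (by norm_num)]
  linarith

lemma pow_rpow_swap {x : ℝ} (hx : 0 ≤ x) (s : ℝ) (k : ℕ) :
    (x ^ k) ^ s = (x ^ s) ^ k := by
  rw [← Real.rpow_natCast x k, ← Real.rpow_mul hx, mul_comm, Real.rpow_mul hx,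
    Real.rpow_natCast]

lemma sum_case1 (s C₁ h m : ℝ) (hs : 1 ≤ s) (hC₁ : 1 ≤ C₁) (hh0 : 0 < h)
    (N M : ℕ) (hNM : N ≤ M)
    (hsmall : ∀ j < M, (2:ℝ)^s * C₁ * (j:ℝ)^s * h ≤ 2⁻¹) :
    ∑ j ∈ Finset.Ico N M, C₁^j * (j.factorial:ℝ)^s * h^((j:ℝ)-m) ≤
      2 * ((2:ℝ)^s*C₁)^N * (N.factorial:ℝ)^s * h^((N:ℝ)-m) := by
  have hs0 : (0:ℝ) ≤ s := by linarith
  have h2s : (0:ℝ) < (2:ℝ)^s := Real.rpow_pos_of_pos two_pos s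
  have hC₁0 : (0:ℝ) < C₁ := by linarith
  rw [Finset.sum_Ico_eq_sum_range]
  have key : ∀ i ∈ Finset.range (M - N),
      C₁^(N+i) * ((N+i).factorial:ℝ)^s * h^(((N+i:ℕ):ℝ)-m) ≤
      (((2:ℝ)^s*C₁)^N * (N.factorial:ℝ)^s * h^((N:ℝ)-m)) * (2⁻¹)^i := by
    intro i hi
    have hiM : N + i < M := by simp only [Finset.mem_range] at hi; omega
    have hfac : ((N+i).factorial : ℝ) ≤ (2:ℝ)^(N+i) * N.factorial * i.factorial := by
      have h1 : (N+i).choose N * N.factorial * i.factorial = (N+i).factorial := by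
        have := Nat.choose_mul_factorial_mul_factorial (show N ≤ N + i by omega)
        simpa [Nat.add_sub_cancel_left] using this
      have h2 : ((N+i).choose N : ℝ) ≤ (2:ℝ)^(N+i) := by
        exact_mod_cast choose_le_two_pow (N+i) N
      calc ((N+i).factorial : ℝ) = ((N+i).choose N : ℝ) * N.factorial * i.factorial := by
            rw [← h1]; push_cast; ring
        _ ≤ (2:ℝ)^(N+i) * N.factorial * i.factorial := by gcongr
    have e1 : h^(((N+i:ℕ):ℝ)-m) = h^((N:ℝ)-m) * h^i := by
      have : ((N+i:ℕ):ℝ) - m = ((N:ℝ) - m) + (i:ℕ) := by push_cast; ring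
      rw [this, Real.rpow_add hh0, Real.rpow_natCast]
    have e2 : ((N+i).factorial:ℝ)^s ≤ ((2:ℝ)^s)^(N+i) * (N.factorial:ℝ)^s * ((i:ℝ)^s)^i := by
      calc ((N+i).factorial:ℝ)^s ≤ ((2:ℝ)^(N+i) * N.factorial * i.factorial)^s :=
            Real.rpow_le_rpow (by positivity) hfac hs0
        _ = ((2:ℝ)^s)^(N+i) * (N.factorial:ℝ)^s * (i.factorial:ℝ)^s := by
            rw [Real.mul_rpow (by positivity) (by positivity),
              Real.mul_rpow (by positivity) (by positivity),
              pow_rpow_swap (by norm_num : (0:ℝ) ≤ 2)]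
        _ ≤ ((2:ℝ)^s)^(N+i) * (N.factorial:ℝ)^s * ((i:ℝ)^s)^i := by
            gcongr
            calc (i.factorial:ℝ)^s ≤ ((i:ℝ)^i)^s := by
                  apply Real.rpow_le_rpow (by positivity) _ hs0
                  exact_mod_cast Nat.factorial_le_pow i
              _ = ((i:ℝ)^s)^i := pow_rpow_swap (by positivity) s i
    have e3 : (2:ℝ)^s * C₁ * (i:ℝ)^s * h ≤ 2⁻¹ := by
      calc (2:ℝ)^s * C₁ * (i:ℝ)^s * h ≤ (2:ℝ)^s * C₁ * ((N+i:ℕ):ℝ)^s * h := by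
            have hb : ((i:ℝ))^s ≤ ((N+i:ℕ):ℝ)^s :=
              Real.rpow_le_rpow (by positivity) (by exact_mod_cast Nat.le_add_left i N) hs0
            exact mul_le_mul_of_nonneg_right
              (mul_le_mul_of_nonneg_left hb (by positivity)) hh0.le
        _ ≤ 2⁻¹ := hsmall (N+i) hiM
    calc C₁^(N+i) * ((N+i).factorial:ℝ)^s * h^(((N+i:ℕ):ℝ)-m)
        = C₁^(N+i) * ((N+i).factorial:ℝ)^s * (h^((N:ℝ)-m) * h^i) := by rw [e1]
      _ ≤ C₁^(N+i) * (((2:ℝ)^s)^(N+i) * (N.factorial:ℝ)^s * ((i:ℝ)^s)^i) *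
            (h^((N:ℝ)-m) * h^i) := by
          gcongr
      _ = (((2:ℝ)^s*C₁)^N * (N.factorial:ℝ)^s * h^((N:ℝ)-m)) *
            ((2:ℝ)^s * C₁ * (i:ℝ)^s * h)^i := by
          rw [pow_add C₁, pow_add ((2:ℝ)^s), mul_pow ((2:ℝ)^s) C₁, mul_pow, mul_pow, mul_pow]
          ring
      _ ≤ (((2:ℝ)^s*C₁)^N * (N.factorial:ℝ)^s * h^((N:ℝ)-m)) * (2⁻¹)^i := by
          gcongr
  calc ∑ i ∈ Finset.range (M - N),
        C₁^(N+i) * ((N+i).factorial:ℝ)^s * h^(((N+i:ℕ):ℝ)-m)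
      ≤ ∑ i ∈ Finset.range (M - N),
        ((((2:ℝ)^s*C₁)^N * (N.factorial:ℝ)^s * h^((N:ℝ)-m)) * (2⁻¹)^i) :=
        Finset.sum_le_sum key
    _ = (((2:ℝ)^s*C₁)^N * (N.factorial:ℝ)^s * h^((N:ℝ)-m)) *
        ∑ i ∈ Finset.range (M - N), (2⁻¹:ℝ)^i := by rw [Finset.mul_sum]
    _ ≤ (((2:ℝ)^s*C₁)^N * (N.factorial:ℝ)^s * h^((N:ℝ)-m)) * 2 := by
        have := geom_half_le_two (M - N)
        gcongr
    _ = 2 * ((2:ℝ)^s*C₁)^N * (N.factorial:ℝ)^s * h^((N:ℝ)-m) := by ring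

lemma sum_case2 (s C₁ D h m : ℝ) (hs : 1 ≤ s) (hC₁ : 1 ≤ C₁) (hCD : C₁ ≤ D)
    (hh0 : 0 < h) (N M : ℕ) (hMN : M ≤ N) (hinv : h⁻¹ ≤ D * (M:ℝ)^s) :
    ∑ j ∈ Finset.Ico M N, C₁^j * (j.factorial:ℝ)^s * h^((j:ℝ)-m) ≤
      ((2:ℝ) * Real.exp s * D)^N * (N.factorial:ℝ)^s * h^((N:ℝ)-m) := by
  have hs0 : (0:ℝ) ≤ s := by linarith
  have hD0 : (0:ℝ) < D := by linarith
  have key : ∀ j ∈ Finset.Ico M N, C₁^j * (j.factorial:ℝ)^s * h^((j:ℝ)-m) ≤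
      (Real.exp s * D)^N * (N.factorial:ℝ)^s * h^((N:ℝ)-m) := by
    intro j hj
    obtain ⟨hMj, hjN⟩ := Finset.mem_Ico.1 hj
    have hjN' : j ≤ N := hjN.le
    have e1 : h^((j:ℝ)-m) = h^((N:ℝ)-m) * (h⁻¹)^(N-j) := by
      have hc : (j:ℝ) - m = ((N:ℝ)-m) - ((N-j:ℕ):ℝ) := by
        rw [Nat.cast_sub hjN']; ring
      rw [hc, Real.rpow_sub hh0, Real.rpow_natCast, div_eq_mul_inv, inv_pow]
    have e2 : (h⁻¹)^(N-j) ≤ (D * (N:ℝ)^s)^(N-j) := by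
      apply pow_le_pow_left₀ (by positivity)
      calc h⁻¹ ≤ D * (M:ℝ)^s := hinv
        _ ≤ D * (N:ℝ)^s := by
            have : ((M:ℝ))^s ≤ ((N:ℝ))^s :=
              Real.rpow_le_rpow (by positivity) (by exact_mod_cast hMN) hs0
            exact mul_le_mul_of_nonneg_left this hD0.le
    have e3 : (j.factorial:ℝ) * ((N:ℝ))^(N-j) ≤ Real.exp N * N.factorial := by
      calc (j.factorial:ℝ) * (N:ℝ)^(N-j) ≤ (N:ℝ)^j * (N:ℝ)^(N-j) := by
            have : (j.factorial:ℝ) ≤ (N:ℝ)^j := by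
              calc (j.factorial:ℝ) ≤ (j:ℝ)^j := by exact_mod_cast Nat.factorial_le_pow j
                _ ≤ (N:ℝ)^j := by
                    apply pow_le_pow_left₀ (by positivity)
                    exact_mod_cast hjN'
            exact mul_le_mul_of_nonneg_right this (by positivity)
        _ = (N:ℝ)^N := by rw [← pow_add]; congr 1; omega
        _ ≤ Real.exp N * N.factorial := npow_le_exp_mul_factorial N
    have e4 : (j.factorial:ℝ)^s * (((N:ℝ))^(N-j))^s ≤ (Real.exp s)^N * (N.factorial:ℝ)^s := by
      calc (j.factorial:ℝ)^s * ((N:ℝ)^(N-j))^s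
          = ((j.factorial:ℝ) * (N:ℝ)^(N-j))^s :=
            (Real.mul_rpow (by positivity) (by positivity)).symm
        _ ≤ (Real.exp (N:ℝ) * N.factorial)^s := Real.rpow_le_rpow (by positivity) e3 hs0
        _ = (Real.exp (N:ℝ))^s * (N.factorial:ℝ)^s :=
            Real.mul_rpow (by positivity) (by positivity)
        _ = (Real.exp s)^N * (N.factorial:ℝ)^s := by
            rw [← Real.exp_mul, mul_comm (N:ℝ) s, Real.exp_mul, Real.rpow_natCast]
    calc C₁^j * (j.factorial:ℝ)^s * h^((j:ℝ)-m)
        = C₁^j * (j.factorial:ℝ)^s * h^((N:ℝ)-m) * (h⁻¹)^(N-j) := by rw [e1]; ring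
      _ ≤ C₁^j * (j.factorial:ℝ)^s * h^((N:ℝ)-m) * (D * (N:ℝ)^s)^(N-j) := by
          have hnn : (0:ℝ) ≤ C₁^j * (j.factorial:ℝ)^s * h^((N:ℝ)-m) := by positivity
          exact mul_le_mul_of_nonneg_left e2 hnn
      _ = (C₁^j * D^(N-j)) * ((j.factorial:ℝ)^s * (((N:ℝ))^(N-j))^s) * h^((N:ℝ)-m) := by
          rw [mul_pow, ← pow_rpow_swap (by positivity : (0:ℝ) ≤ (N:ℝ)) s (N-j)]
          ring
      _ ≤ (D^j * D^(N-j)) * ((Real.exp s)^N * (N.factorial:ℝ)^s) * h^((N:ℝ)-m) := by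
          have h1 : C₁^j * D^(N-j) ≤ D^j * D^(N-j) := by
            apply mul_le_mul_of_nonneg_right _ (by positivity)
            exact pow_le_pow_left₀ (by linarith) hCD j
          have h2 : (0:ℝ) ≤ h^((N:ℝ)-m) := by positivity
          apply mul_le_mul_of_nonneg_right _ h2
          apply mul_le_mul h1 e4 (by positivity) (by positivity)
      _ = (Real.exp s * D)^N * (N.factorial:ℝ)^s * h^((N:ℝ)-m) := by
          rw [← pow_add]
          have : j + (N - j) = N := by omega
          rw [this, mul_pow]
          ring
  calc ∑ j ∈ Finset.Ico M N, C₁^j * (j.factorial:ℝ)^s * h^((j:ℝ)-m)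
      ≤ ∑ _j ∈ Finset.Ico M N,
        ((Real.exp s * D)^N * (N.factorial:ℝ)^s * h^((N:ℝ)-m)) := Finset.sum_le_sum key
    _ = ((N - M : ℕ):ℝ) * ((Real.exp s * D)^N * (N.factorial:ℝ)^s * h^((N:ℝ)-m)) := by
        rw [Finset.sum_const, Nat.card_Ico, nsmul_eq_mul]
    _ ≤ (2:ℝ)^N * ((Real.exp s * D)^N * (N.factorial:ℝ)^s * h^((N:ℝ)-m)) := by
        apply mul_le_mul_of_nonneg_right _ (by positivity)
        calc ((N - M : ℕ):ℝ) ≤ (N:ℝ) := by exact_mod_cast Nat.sub_le N M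
          _ ≤ (2:ℝ)^N := by exact_mod_cast (Nat.lt_two_pow_self (n := N)).le
    _ = ((2:ℝ) * Real.exp s * D)^N * (N.factorial:ℝ)^s * h^((N:ℝ)-m) := by
        rw [mul_pow, mul_pow]; ring


set_option maxHeartbeats 1000000

/-- **Gevrey Borel theorem (via Carleson's moment method).** Every formal Gevrey-`s`
symbol of degree `m` can be realized by a genuine semiclassical Gevrey-`s` symbol of
order `m`, with Gevrey-`s` control of all the partial sums of the asymptotic expansion. -/
theorem gevrey_borel (s : ℝ) (hs : 1 ≤ s) (m : ℝ) (n : ℕ) (hn : 1 ≤ n)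
    (a : ℕ → ℝ → ((Fin n → ℝ) × (Fin n → ℝ)) → ℂ)
    (ha_smooth : ∀ j, ∀ h ∈ Set.Ioc (0:ℝ) 1, ContDiff ℝ (⊤ : ℕ∞) (a j h))
    (C : ℝ) (hC : 0 < C)
    (ha_bound : ∀ j : ℕ, ∀ h ∈ Set.Ioc (0:ℝ) 1, ∀ (α β : Fin n → ℕ)
      (p : (Fin n → ℝ) × (Fin n → ℝ)),
      ‖dirDeriv (mIdxList α (ex n) ++ mIdxList β (eθ n)) (a j h) p‖ ≤
        C ^ (1 + msize α + msize β + j) * ((Nat.factorial j : ℕ) : ℝ) ^ s *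
          ((mfact α : ℕ) : ℝ) ^ s * ((mfact β : ℕ) : ℝ) ^ s * h ^ ((j : ℝ) - m)) :
    ∃ (b : ℝ → ((Fin n → ℝ) × (Fin n → ℝ)) → ℂ),
      (∀ h ∈ Set.Ioc (0:ℝ) 1, ContDiff ℝ (⊤ : ℕ∞) (b h)) ∧
      ∃ C' > 0, ∀ N : ℕ, ∀ h ∈ Set.Ioc (0:ℝ) 1, ∀ (α β : Fin n → ℕ)
        (p : (Fin n → ℝ) × (Fin n → ℝ)),
        ‖dirDeriv (mIdxList α (ex n) ++ mIdxList β (eθ n))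
            (fun q => b h q - ∑ j ∈ Finset.range N, a j h q) p‖ ≤
          C' ^ (1 + msize α + msize β + N) * ((Nat.factorial N : ℕ) : ℝ) ^ s *
            ((mfact α : ℕ) : ℝ) ^ s * ((mfact β : ℕ) : ℝ) ^ s * h ^ ((N : ℝ) - m) := by
  have hs0 : (0:ℝ) ≤ s := by linarith
  have hsne : s ≠ 0 := by positivity
  set C₁ : ℝ := max C 1 with hC₁def
  have hC₁ : 1 ≤ C₁ := le_max_right _ _
  have hC₁0 : (0:ℝ) < C₁ := by linarith
  set D : ℝ := (2:ℝ)^(s+1) * C₁ with hDdef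
  have h2s1 : (1:ℝ) ≤ (2:ℝ)^(s+1) := by
    rw [show (1:ℝ) = (2:ℝ)^(0:ℝ) from (Real.rpow_zero 2).symm]
    exact Real.rpow_le_rpow_of_exponent_le (by norm_num) (by linarith)
  have hCD : C₁ ≤ D := by nlinarith
  have hD0 : (0:ℝ) < D := by nlinarith
  have hD2 : D = 2 * ((2:ℝ)^s * C₁) := by
    rw [hDdef, Real.rpow_add two_pos, Real.rpow_one]; ring
  have hexp1 : (1:ℝ) ≤ Real.exp s := by
    rw [← Real.exp_zero]; exact Real.exp_le_exp.2 (by linarith)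
  set Q : ℝ := 2 * Real.exp s * D with hQdef
  have hQD : D ≤ Q := by nlinarith
  have hQ0 : (0:ℝ) < Q := by nlinarith
  have hC₁Q : C₁ ≤ Q := hCD.trans hQD
  refine ⟨fun h q => ∑ j ∈ Finset.range (⌊((D*h)⁻¹) ^ (s⁻¹:ℝ)⌋₊ + 1), a j h q, ?_, ?_⟩
  · intro h hh
    exact ContDiff.sum (fun j _ => ha_smooth j h hh)
  refine ⟨2*Q, by linarith, ?_⟩
  intro N h hh α β p
  obtain ⟨hh0, hh1⟩ := hh
  set Mh : ℕ := ⌊((D*h)⁻¹) ^ (s⁻¹:ℝ)⌋₊ + 1 with hMhdef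
  -- basic facts about Mh
  have hT0 : (0:ℝ) ≤ ((D*h)⁻¹) ^ (s⁻¹ : ℝ) := Real.rpow_nonneg (by positivity) _
  have hTs : (((D*h)⁻¹ ^ (s⁻¹:ℝ)) : ℝ) ^ s = (D*h)⁻¹ := by
    rw [← Real.rpow_mul (by positivity), inv_mul_cancel₀ hsne, Real.rpow_one]
  have P1 : ∀ j < Mh, (2:ℝ)^s * C₁ * (j:ℝ)^s * h ≤ 2⁻¹ := by
    intro j hj
    have hjle : (j:ℝ) ≤ ((D*h)⁻¹) ^ (s⁻¹:ℝ) := by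
      have hj' : j ≤ ⌊((D*h)⁻¹) ^ (s⁻¹:ℝ)⌋₊ := by omega
      exact le_trans (Nat.cast_le.2 hj') (Nat.floor_le hT0)
    have hjs : ((j:ℝ))^s ≤ (D*h)⁻¹ := by
      rw [← hTs]; exact Real.rpow_le_rpow (by positivity) hjle hs0
    have hD1 : D * ((j:ℝ)^s) * h ≤ 1 := by
      calc D * (j:ℝ)^s * h ≤ D * (D*h)⁻¹ * h :=
            mul_le_mul_of_nonneg_right (mul_le_mul_of_nonneg_left hjs hD0.le) hh0.le
        _ = 1 := by field_simp
    have h' : 2 * ((2:ℝ)^s * C₁ * (j:ℝ)^s * h) = D * ((j:ℝ)^s) * h := by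
      rw [hD2]; ring
    linarith
  have P2 : h⁻¹ ≤ D * ((Mh:ℕ):ℝ)^s := by
    have hlt : ((D*h)⁻¹)^(s⁻¹:ℝ) ≤ ((Mh:ℕ):ℝ) := by
      have h1 := Nat.lt_floor_add_one (((D*h)⁻¹)^(s⁻¹:ℝ))
      have h2 : ((Mh:ℕ):ℝ) = (⌊((D*h)⁻¹) ^ (s⁻¹:ℝ)⌋₊ : ℝ) + 1 := by
        rw [hMhdef]; push_cast; ring
      rw [h2]; exact h1.le
    have h3 : (D*h)⁻¹ ≤ ((Mh:ℕ):ℝ)^s := by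
      rw [← hTs]; exact Real.rpow_le_rpow hT0 hlt hs0
    calc h⁻¹ = D * (D*h)⁻¹ := by field_simp
      _ ≤ D * ((Mh:ℕ):ℝ)^s := mul_le_mul_of_nonneg_left h3 hD0.le
  set l : List ((Fin n → ℝ) × (Fin n → ℝ)) := mIdxList α (ex n) ++ mIdxList β (eθ n) with hldef
  set K : ℝ := C₁^(1 + msize α + msize β) * ((mfact α : ℕ):ℝ)^s * ((mfact β : ℕ):ℝ)^s
    with hKdef
  have hK0 : 0 ≤ K := by positivity
  have hterm : ∀ j : ℕ, ‖dirDeriv l (a j h) p‖ ≤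
      K * (C₁^j * ((j.factorial:ℕ):ℝ)^s * h^((j:ℝ)-m)) := by
    intro j
    refine (ha_bound j h ⟨hh0, hh1⟩ α β p).trans ?_
    have h1 : C ^ (1 + msize α + msize β + j) ≤ C₁ ^ (1 + msize α + msize β + j) :=
      pow_le_pow_left₀ hC.le (le_max_left C 1) _
    calc C ^ (1 + msize α + msize β + j) * ((j.factorial:ℕ):ℝ)^s *
          ((mfact α : ℕ):ℝ)^s * ((mfact β : ℕ):ℝ)^s * h^((j:ℝ)-m)
        ≤ C₁ ^ (1 + msize α + msize β + j) * ((j.factorial:ℕ):ℝ)^s *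
          ((mfact α : ℕ):ℝ)^s * ((mfact β : ℕ):ℝ)^s * h^((j:ℝ)-m) := by gcongr
      _ = K * (C₁^j * ((j.factorial:ℕ):ℝ)^s * h^((j:ℝ)-m)) := by
          rw [hKdef, pow_add]; ring
  -- the final arithmetic step, common to both cases
  have hfinal : K * (2 * Q^N * ((N.factorial:ℕ):ℝ)^s * h^((N:ℝ)-m)) ≤
      (2*Q) ^ (1 + msize α + msize β + N) * ((Nat.factorial N : ℕ) : ℝ) ^ s *
        ((mfact α : ℕ) : ℝ) ^ s * ((mfact β : ℕ) : ℝ) ^ s * h ^ ((N : ℝ) - m) := by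
    have he1 : 1 ≤ 1 + msize α + msize β := by omega
    have h21 : 2 * C₁^(1 + msize α + msize β) ≤ (2*Q)^(1 + msize α + msize β) := by
      calc 2 * C₁^(1 + msize α + msize β) ≤ 2^(1 + msize α + msize β) * C₁^(1 + msize α + msize β) := by
            have : (2:ℝ) ≤ 2^(1 + msize α + msize β) := by
              calc (2:ℝ) = 2^1 := (pow_one 2).symm
                _ ≤ 2^(1 + msize α + msize β) := pow_le_pow_right₀ one_le_two he1
            exact mul_le_mul_of_nonneg_right this (by positivity)
        _ = (2*C₁)^(1 + msize α + msize β) := (mul_pow 2 C₁ _).symm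
        _ ≤ (2*Q)^(1 + msize α + msize β) :=
            pow_le_pow_left₀ (by positivity) (by linarith) _
    have h22 : Q^N ≤ (2*Q)^N := pow_le_pow_left₀ hQ0.le (by linarith) N
    calc K * (2 * Q^N * ((N.factorial:ℕ):ℝ)^s * h^((N:ℝ)-m))
        = (2 * C₁^(1 + msize α + msize β)) * Q^N *
          (((N.factorial:ℕ):ℝ)^s * ((mfact α : ℕ):ℝ)^s * ((mfact β : ℕ):ℝ)^s * h^((N:ℝ)-m)) := by
          rw [hKdef]; ring
      _ ≤ ((2*Q)^(1 + msize α + msize β)) * ((2*Q)^N) *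
          (((N.factorial:ℕ):ℝ)^s * ((mfact α : ℕ):ℝ)^s * ((mfact β : ℕ):ℝ)^s * h^((N:ℝ)-m)) := by
          have hA : (0:ℝ) ≤ ((N.factorial:ℕ):ℝ)^s * ((mfact α : ℕ):ℝ)^s *
              ((mfact β : ℕ):ℝ)^s * h^((N:ℝ)-m) := by positivity
          exact mul_le_mul_of_nonneg_right
            (mul_le_mul h21 h22 (by positivity) (by positivity)) hA
      _ = (2*Q) ^ (1 + msize α + msize β + N) * ((Nat.factorial N : ℕ) : ℝ) ^ s *
          ((mfact α : ℕ) : ℝ) ^ s * ((mfact β : ℕ) : ℝ) ^ s * h ^ ((N : ℝ) - m) := by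
          rw [pow_add]; ring
  rcases le_or_gt N Mh with hcase | hcase
  · -- N ≤ Mh
    have hfun : (fun q => (fun (h:ℝ) q => ∑ j ∈ Finset.range (⌊((D*h)⁻¹) ^ (s⁻¹:ℝ)⌋₊ + 1),
          a j h q) h q - ∑ j ∈ Finset.range N, a j h q)
        = fun q => ∑ j ∈ Finset.Ico N Mh, a j h q := by
      funext q
      show (∑ j ∈ Finset.range Mh, a j h q) - ∑ j ∈ Finset.range N, a j h q
        = ∑ j ∈ Finset.Ico N Mh, a j h q
      rw [Finset.sum_Ico_eq_sub _ hcase]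
    rw [hfun, dirDeriv_sum (Finset.Ico N Mh) l (fun j => a j h)
      (fun j _ => ha_smooth j h ⟨hh0, hh1⟩)]
    have hsum : ∑ j ∈ Finset.Ico N Mh, C₁^j * ((j.factorial:ℕ):ℝ)^s * h^((j:ℝ)-m) ≤
        2 * ((2:ℝ)^s*C₁)^N * ((N.factorial:ℕ):ℝ)^s * h^((N:ℝ)-m) :=
      sum_case1 s C₁ h m hs hC₁ hh0 N Mh hcase P1
    have hQcomp : ((2:ℝ)^s*C₁)^N ≤ Q^N := by
      apply pow_le_pow_left₀ (by positivity)
      nlinarith [Real.rpow_pos_of_pos two_pos s, hC₁0]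
    calc ‖∑ j ∈ Finset.Ico N Mh, dirDeriv l (a j h) p‖
        ≤ ∑ j ∈ Finset.Ico N Mh, ‖dirDeriv l (a j h) p‖ := norm_sum_le _ _
      _ ≤ ∑ j ∈ Finset.Ico N Mh, K * (C₁^j * ((j.factorial:ℕ):ℝ)^s * h^((j:ℝ)-m)) :=
          Finset.sum_le_sum (fun j _ => hterm j)
      _ = K * ∑ j ∈ Finset.Ico N Mh, C₁^j * ((j.factorial:ℕ):ℝ)^s * h^((j:ℝ)-m) := by
          rw [Finset.mul_sum]
      _ ≤ K * (2 * ((2:ℝ)^s*C₁)^N * ((N.factorial:ℕ):ℝ)^s * h^((N:ℝ)-m)) :=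
          mul_le_mul_of_nonneg_left hsum hK0
      _ ≤ K * (2 * Q^N * ((N.factorial:ℕ):ℝ)^s * h^((N:ℝ)-m)) := by
          apply mul_le_mul_of_nonneg_left _ hK0
          have hA : (0:ℝ) ≤ ((N.factorial:ℕ):ℝ)^s := by positivity
          have hB : (0:ℝ) ≤ h^((N:ℝ)-m) := by positivity
          exact mul_le_mul_of_nonneg_right (mul_le_mul_of_nonneg_right
            (mul_le_mul_of_nonneg_left hQcomp (by norm_num)) hA) hB
      _ ≤ _ := hfinal
  · -- Mh < N
    have hfun : (fun q => (fun (h:ℝ) q => ∑ j ∈ Finset.range (⌊((D*h)⁻¹) ^ (s⁻¹:ℝ)⌋₊ + 1),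
          a j h q) h q - ∑ j ∈ Finset.range N, a j h q)
        = fun q => -(∑ j ∈ Finset.Ico Mh N, a j h q) := by
      funext q
      show (∑ j ∈ Finset.range Mh, a j h q) - ∑ j ∈ Finset.range N, a j h q
        = -(∑ j ∈ Finset.Ico Mh N, a j h q)
      rw [Finset.sum_Ico_eq_sub _ hcase.le]
      ring
    rw [hfun, dirDeriv_neg]
    have hrw : dirDeriv l (fun q => ∑ j ∈ Finset.Ico Mh N, a j h q)
        = fun q => ∑ j ∈ Finset.Ico Mh N, dirDeriv l (a j h) q :=
      dirDeriv_sum (Finset.Ico Mh N) l (fun j => a j h) (fun j _ => ha_smooth j h ⟨hh0, hh1⟩)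
    rw [hrw]
    have hsum : ∑ j ∈ Finset.Ico Mh N, C₁^j * ((j.factorial:ℕ):ℝ)^s * h^((j:ℝ)-m) ≤
        Q^N * ((N.factorial:ℕ):ℝ)^s * h^((N:ℝ)-m) := by
      have := sum_case2 s C₁ D h m hs hC₁ hCD hh0 N Mh hcase.le P2
      rw [hQdef]
      exact this
    calc ‖-(∑ j ∈ Finset.Ico Mh N, dirDeriv l (a j h) p)‖
        = ‖∑ j ∈ Finset.Ico Mh N, dirDeriv l (a j h) p‖ := norm_neg _
      _ ≤ ∑ j ∈ Finset.Ico Mh N, ‖dirDeriv l (a j h) p‖ := norm_sum_le _ _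
      _ ≤ ∑ j ∈ Finset.Ico Mh N, K * (C₁^j * ((j.factorial:ℕ):ℝ)^s * h^((j:ℝ)-m)) :=
          Finset.sum_le_sum (fun j _ => hterm j)
      _ = K * ∑ j ∈ Finset.Ico Mh N, C₁^j * ((j.factorial:ℕ):ℝ)^s * h^((j:ℝ)-m) := by
          rw [Finset.mul_sum]
      _ ≤ K * (Q^N * ((N.factorial:ℕ):ℝ)^s * h^((N:ℝ)-m)) :=
          mul_le_mul_of_nonneg_left hsum hK0
      _ ≤ K * (2 * Q^N * ((N.factorial:ℕ):ℝ)^s * h^((N:ℝ)-m)) := by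
          apply mul_le_mul_of_nonneg_left _ hK0
          have ht : (0:ℝ) ≤ Q^N * ((N.factorial:ℕ):ℝ)^s * h^((N:ℝ)-m) := by positivity
          nlinarith [ht]
      _ ≤ _ := hfinal
end

section
/- Let s ≥ 1 be a real number, n ≥ 1, and let μ, ν, λ ∈ ℕⁿ be multi-indices with μ + ν = λ. Then for every natural number ℓ with ℓ ≤ |ν| one has the factorial inequality (μ!)^s · ν! · (ℓ!)^{2s−2} ≤ n^{(2s−2)|ν|} · (λ!)^{2s−1}, where factorials of multi-indices are raised to real powers as positive real numbers. -/
open Real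

lemma mfact_mul_le {n : ℕ} (μ ν : Fin n → ℕ) :
    mfact μ * mfact ν ≤ mfact (μ + ν) := by
  rw [mfact, mfact, mfact, ← Finset.prod_mul_distrib]
  refine Finset.prod_le_prod' fun i _ => ?_
  exact Nat.le_of_dvd (Nat.factorial_pos _) (Nat.factorial_mul_factorial_dvd_factorial_add _ _)

lemma multinomial_le {n : ℕ} (ν : Fin n → ℕ) :
    Nat.multinomial Finset.univ ν ≤ n ^ msize ν := by
  have h := Finset.sum_pow_eq_sum_piAntidiag (Finset.univ : Finset (Fin n))
    (fun _ => (1 : ℕ)) (msize ν)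
  simp only [Finset.sum_const, smul_eq_mul, mul_one, one_pow, Finset.prod_const_one,
    Finset.card_univ, Fintype.card_fin, Nat.cast_id] at h
  rw [h]
  refine Finset.single_le_sum (f := fun k => Nat.multinomial Finset.univ k)
    (fun i _ => Nat.zero_le _) ?_
  simp [Finset.mem_piAntidiag, msize]

lemma factorial_size_le {n : ℕ} (ν : Fin n → ℕ) :
    Nat.factorial (msize ν) ≤ n ^ msize ν * mfact ν := by
  have h := Nat.multinomial_spec Finset.univ ν
  rw [msize, ← h, mfact, mul_comm]
  exact Nat.mul_le_mul_right _ (multinomial_le ν)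

/-- **Key factorial estimate for the Gevrey-(2s-1) stationary phase remainder:**
if `μ + ν = lam` and `ℓ ≤ |ν|`, then
`(μ!)^s · ν! · (ℓ!)^{2s-2} ≤ n^{(2s-2)|ν|} · (lam!)^{2s-1}`. -/
theorem gevrey_factorial_estimate (s : ℝ) (hs : 1 ≤ s) (n : ℕ) (hn : 1 ≤ n)
    (μ ν lam : Fin n → ℕ) (hsum : μ + ν = lam) (ℓ : ℕ) (hℓ : ℓ ≤ msize ν) :
    ((mfact μ : ℕ) : ℝ) ^ s * ((mfact ν : ℕ) : ℝ) *
        ((Nat.factorial ℓ : ℕ) : ℝ) ^ (2 * s - 2) ≤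
      (n : ℝ) ^ ((2 * s - 2) * ((msize ν : ℕ) : ℝ)) *
        ((mfact lam : ℕ) : ℝ) ^ (2 * s - 1) := by
  set m : ℕ := msize ν
  have he : (0:ℝ) ≤ 2 * s - 2 := by linarith
  have hA1 : (1:ℝ) ≤ (mfact μ : ℝ) := by
    exact_mod_cast Nat.one_le_iff_ne_zero.mpr (Finset.prod_ne_zero_iff.mpr
      fun i _ => (Nat.factorial_pos _).ne')
  have hB1 : (1:ℝ) ≤ (mfact ν : ℝ) := by
    exact_mod_cast Nat.one_le_iff_ne_zero.mpr (Finset.prod_ne_zero_iff.mpr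
      fun i _ => (Nat.factorial_pos _).ne')
  have hA0 : (0:ℝ) ≤ (mfact μ : ℝ) := by linarith
  have hB0 : (0:ℝ) ≤ (mfact ν : ℝ) := by linarith
  have hN0 : (0:ℝ) ≤ (n:ℝ) := Nat.cast_nonneg _
  have hF : ((Nat.factorial ℓ : ℕ) : ℝ) ≤ (n:ℝ) ^ (m:ℕ) * (mfact ν : ℝ) := by
    have : Nat.factorial ℓ ≤ n ^ m * mfact ν :=
      le_trans (Nat.factorial_le hℓ) (factorial_size_le ν)
    exact_mod_cast this
  have hF0 : (0:ℝ) ≤ ((Nat.factorial ℓ : ℕ) : ℝ) := Nat.cast_nonneg _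
  have hAB : (mfact μ : ℝ) * (mfact ν : ℝ) ≤ (mfact lam : ℝ) := by
    have := mfact_mul_le μ ν
    rw [hsum] at this
    exact_mod_cast this
  calc ((mfact μ : ℕ) : ℝ) ^ s * ((mfact ν : ℕ) : ℝ) *
        ((Nat.factorial ℓ : ℕ) : ℝ) ^ (2 * s - 2)
      ≤ ((mfact μ : ℕ) : ℝ) ^ s * ((mfact ν : ℕ) : ℝ) *
        ((n:ℝ) ^ (m:ℕ) * (mfact ν : ℝ)) ^ (2 * s - 2) := by
        refine mul_le_mul_of_nonneg_left (rpow_le_rpow hF0 hF he) ?_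
        positivity
    _ = (n : ℝ) ^ ((2 * s - 2) * (m:ℝ)) *
        (((mfact μ : ℝ)) ^ s * ((mfact ν : ℝ)) ^ (2*s-1)) := by
        rw [mul_rpow (by positivity) hB0, ← rpow_natCast (n:ℝ) m,
          ← rpow_mul hN0, mul_comm (m:ℝ)]
        rw [show (2*s-1 : ℝ) = 1 + (2*s-2) by ring, rpow_add (by linarith),
          rpow_one]
        ring
    _ ≤ (n : ℝ) ^ ((2 * s - 2) * (m:ℝ)) *
        (((mfact μ : ℝ)) ^ (2*s-1) * ((mfact ν : ℝ)) ^ (2*s-1)) := by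
        refine mul_le_mul_of_nonneg_left (mul_le_mul_of_nonneg_right
          (rpow_le_rpow_of_exponent_le hA1 (by linarith)) (by positivity)) (by positivity)
    _ ≤ (n : ℝ) ^ ((2 * s - 2) * (m:ℝ)) * ((mfact lam : ℝ)) ^ (2*s-1) := by
        rw [← mul_rpow hA0 hB0]
        exact mul_le_mul_of_nonneg_left
          (rpow_le_rpow (by positivity) hAB (by linarith)) (by positivity)
end
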